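/- Let A, B, C be integers with A > 0, B > 0 and D := B² − 4AC < 0, and let q(m,n) = A·m² + B·m·n + C·n². Then the series whose terms are 1/( e(x,y) · e(x,x+y) · e(y,x+y) ), summed over all pairs (x,y) ∈ S, converges and its sum equals (1/D)·( arctan(√(−D)/B)/√(−D) − 1/B ), where arctan is the principal branch. (This is the paper's Theorem 5, formula (top2), for the topograph of q rooted at the standard-basis edge, with root edge label e₀ = B; the hypothesis B > 0 guarantees that all edge labels e in the upper half are positive, i.e. that the rooted half is admissible.) -/

import Mathlib

/-!
Index `S` by finite lists of booleans: the empty list is the standard basis and the children of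
a pair `(x, y)` are `(x, x + y)` and `(x + y, y)`. Put `D = B² - 4AC` and
`φ(a) = (1/D) (arctan(√-D / a) / √-D - 1/a)`. At a vertex with labels `a = e(x,y)`,
`b = e(x,x+y)`, `c = e(y,x+y)` one has `b = a + 2q(x)`, `c = a + 2q(y)` and
`e(x,y)² - 4q(x)q(y) = D det(x,y)²`, hence `bc = a(b + c) - D`; the addition formula for arctan
then gives `1/(abc) = φ(a) - φ(b) - φ(c)`. The sum over the first `n` levels of the tree therefore
telescopes to `φ(B)` minus the sum of `φ` over level `n`, and the latter tends to `0` because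
`0 ≤ φ(a) ≤ 1/(3a³)` while `e(x,y) ≥ (x₁ + x₂)(y₁ + y₂)` and the map
`(x, y) ↦ (x₁ + x₂, y₁ + y₂)` is injective on the tree.
-/

/-- The binary quadratic form `q(m,n) = A m² + B m n + C n²`, with real values. -/
noncomputable def q (A B C : ℤ) (v : ℤ × ℤ) : ℝ :=
  (A : ℝ) * (v.1 : ℝ) ^ 2 + (B : ℝ) * (v.1 : ℝ) * (v.2 : ℝ) + (C : ℝ) * (v.2 : ℝ) ^ 2

/-- The edge label `e(u,v) = q(u+v) − q(u) − q(v)` (twice the polar form of `q`). -/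
noncomputable def eLab (A B C : ℤ) (u v : ℤ × ℤ) : ℝ :=
  q A B C (u + v) - q A B C u - q A B C v

/-- Pairs of lattice vectors with nonnegative coordinates and determinant one. -/
def S : Set ((ℤ × ℤ) × (ℤ × ℤ)) :=
  {p | 0 ≤ p.1.1 ∧ 0 ≤ p.1.2 ∧ 0 ≤ p.2.1 ∧ 0 ≤ p.2.2 ∧
    p.1.1 * p.2.2 - p.1.2 * p.2.1 = 1}

open Real Finset Filter Topology

namespace Topograph

def child {α : Type*} [Add α] : Bool → α × α → α × α
  | false, p => (p.1, p.1 + p.2)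
  | true, p => (p.1 + p.2, p.2)

def node {α : Type*} [Add α] (r : α × α) : List Bool → α × α
  | [] => r
  | b :: l => child b (node r l)

lemma map_node {α β : Type*} [AddCommMonoid α] [AddCommMonoid β] (f : α →+ β) (r : α × α)
    (l : List Bool) : Prod.map f f (node r l) = node (Prod.map f f r) l := by
  induction l with
  | nil => rfl
  | cons b l ih => cases b <;> simp [node, child, ← ih]

lemma node_pos {r : ℤ × ℤ} (hr : 0 < r.1 ∧ 0 < r.2) (l : List Bool) :
    0 < (node r l).1 ∧ 0 < (node r l).2 := by
  induction l with
  | nil => exact hr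
  | cons b l ih => cases b <;> simp only [node, child] <;> omega

lemma sum_le_sum_node {r : ℤ × ℤ} (hr : 0 < r.1 ∧ 0 < r.2) (l : List Bool) :
    r.1 + r.2 ≤ (node r l).1 + (node r l).2 := by
  induction l with
  | nil => exact le_rfl
  | cons b l ih => have := node_pos hr l; cases b <;> simp only [node, child] <;> omega

lemma node_injective {r : ℤ × ℤ} (hr : 0 < r.1 ∧ 0 < r.2) : Function.Injective (node r) := by
  intro l₁
  induction l₁ with
  | nil =>
    rintro (_ | ⟨b, l⟩) h
    · rfl
    · have := node_pos hr l
      have := sum_le_sum_node hr l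
      cases b <;> simp only [node, child, Prod.ext_iff] at h <;> omega
  | cons b₁ l₁ ih =>
    rintro (_ | ⟨b₂, l₂⟩) h
    · have := node_pos hr l₁
      have := sum_le_sum_node hr l₁
      cases b₁ <;> simp only [node, child, Prod.ext_iff] at h <;> omega
    · have := node_pos hr l₁
      have := node_pos hr l₂
      cases b₁ <;> cases b₂ <;> simp only [node, child, Prod.ext_iff] at h
      · rw [ih (Prod.ext h.1 (by omega))]
      · omega
      · omega
      · rw [ih (Prod.ext (by omega) h.2)]

def level : ℕ → Finset (List Bool)
  | 0 => {[]}
  | n + 1 => (level n).image (List.cons false) ∪ (level n).image (List.cons true)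

lemma mem_level {n : ℕ} {l : List Bool} : l ∈ level n ↔ l.length = n := by
  induction n generalizing l with
  | zero => simp [level]
  | succ n ih => cases l with
    | nil => simp [level]
    | cons b l => cases b <;> simp [level, ih]

lemma pairwiseDisjoint_level (s : Set ℕ) : s.PairwiseDisjoint level :=
  fun _ _ _ _ hmn => Finset.disjoint_left.2 fun _ hm hn =>
    hmn ((mem_level.1 hm).symm.trans (mem_level.1 hn))

lemma sum_level_succ {M : Type*} [AddCommMonoid M] (f : List Bool → M) (n : ℕ) :
    ∑ l ∈ level (n + 1), f l = ∑ l ∈ level n, (f (false :: l) + f (true :: l)) := by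
  have hdisj : Disjoint ((level n).image (List.cons false)) ((level n).image (List.cons true)) := by
    simp [Finset.disjoint_left]
  rw [level, sum_union hdisj, sum_image fun _ _ _ _ h => List.cons_injective h,
    sum_image fun _ _ _ _ h => List.cons_injective h, sum_add_distrib]

theorem hasSum_of_eq_sub_sub {f h : List Bool → ℝ} (h_nonneg : ∀ l, 0 ≤ h l) (hs : Summable h)
    (hf : ∀ l, f l = h l - h (false :: l) - h (true :: l)) : HasSum f (h []) := by
  have hfs : Summable f :=
    ((hs.sub (hs.comp_injective (List.cons_injective (a := false)))).sub
        (hs.comp_injective (List.cons_injective (a := true)))).congr fun l => (hf l).symm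
  have htele : ∀ n, ∑ k ∈ range n, ∑ l ∈ level k, f l = h [] - ∑ l ∈ level n, h l := by
    intro n
    induction n with
    | zero => simp [level]
    | succ n ih =>
      rw [sum_range_succ, ih, sum_level_succ]
      simp only [hf, sum_sub_distrib, sum_add_distrib]
      ring
  have hlevel : Tendsto (fun n => ∑ l ∈ level n, h l) atTop (𝓝 0) := by
    refine (summable_of_sum_range_le (c := ∑' l, h l) (fun n => sum_nonneg fun l _ => h_nonneg l)
      fun n => ?_).tendsto_atTop_zero
    rw [← sum_biUnion (pairwiseDisjoint_level _)]
    exact hs.sum_le_tsum _ fun l _ => h_nonneg l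
  have hcofinal : Tendsto (fun n => (range n).biUnion level) atTop atTop :=
    tendsto_atTop_finset_of_monotone
      (fun m n hmn => biUnion_subset_biUnion_of_subset_left _ (range_mono hmn))
      fun l => ⟨l.length + 1, mem_biUnion.2 ⟨l.length, by simp, mem_level.2 rfl⟩⟩
  have hpartial : Tendsto (fun n => ∑ l ∈ (range n).biUnion level, f l) atTop (𝓝 (h [])) := by
    simp only [sum_biUnion (pairwiseDisjoint_level _), htele]
    simpa using tendsto_const_nhds.sub hlevel
  convert hfs.hasSum
  exact tendsto_nhds_unique hpartial (hfs.hasSum.comp hcofinal)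

lemma sub_pow_three_div_three_le_arctan {x : ℝ} (hx : 0 ≤ x) : x - x ^ 3 / 3 ≤ arctan x := by
  let F : ℝ → ℝ := fun y => arctan y - (y - y ^ 3 / 3)
  have hF : ∀ y, HasDerivAt F (y ^ 4 / (1 + y ^ 2)) y := fun y => by
    refine ((hasDerivAt_arctan y).sub ((hasDerivAt_id' y).sub
      ((hasDerivAt_pow 3 y).div_const 3))).congr_deriv ?_
    field_simp
    ring
  have hmono : Monotone F :=
    monotone_of_deriv_nonneg (fun y => (hF y).differentiableAt) fun y => by
      rw [(hF y).deriv]; positivity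
  simpa [F] using hmono hx

lemma arctan_le_self {x : ℝ} (hx : 0 ≤ x) : arctan x ≤ x := by
  let F : ℝ → ℝ := fun y => y - arctan y
  have hF : ∀ y, HasDerivAt F (y ^ 2 / (1 + y ^ 2)) y := fun y => by
    refine ((hasDerivAt_id' y).sub (hasDerivAt_arctan y)).congr_deriv ?_
    field_simp
    ring
  have hmono : Monotone F :=
    monotone_of_deriv_nonneg (fun y => (hF y).differentiableAt) fun y => by
      rw [(hF y).deriv]; positivity
  simpa [F] using hmono hx

noncomputable def edgePotential (D a : ℝ) : ℝ :=
  1 / D * (arctan (√(-D) / a) / √(-D) - 1 / a)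

section EdgePotential

variable {D a : ℝ}

lemma edgePotential_sub_sub {b c : ℝ} (hD : D < 0) (ha : 0 < a) (hb : 0 < b) (hc : 0 < c)
    (hbc : b * c = a * (b + c) - D) :
    edgePotential D a - edgePotential D b - edgePotential D c = 1 / (a * b * c) := by
  unfold edgePotential
  set t := √(-D)
  have ht : 0 < t := sqrt_pos.2 (neg_pos.2 hD)
  have ht2 : t ^ 2 = -D := sq_sqrt (neg_nonneg.2 hD.le)
  have hprod : t / b * (t / c) < 1 := by
    rw [div_mul_div_comm, ← sq, div_lt_one (mul_pos hb hc)]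
    nlinarith
  have harctan : arctan (t / b) + arctan (t / c) = arctan (t / a) := by
    rw [arctan_add hprod]
    congr 1
    have : b * c - t ^ 2 = a * (b + c) := by linarith
    rw [div_eq_div_iff (by nlinarith) ha.ne']
    field_simp
    linear_combination (-1) * this
  rw [← harctan]
  calc _ = (a * (b + c) - b * c) / D / (a * b * c) := by field_simp; ring
    _ = 1 / (a * b * c) := by rw [hbc, sub_sub_cancel, div_self hD.ne]

lemma edgePotential_nonneg (hD : D < 0) (ha : 0 < a) : 0 ≤ edgePotential D a := by
  have ht : 0 < √(-D) := sqrt_pos.2 (neg_pos.2 hD)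
  have h : arctan (√(-D) / a) / √(-D) ≤ 1 / a := by
    rw [div_le_iff₀ ht, one_div_mul_eq_div]
    exact arctan_le_self (by positivity)
  exact mul_nonneg_of_nonpos_of_nonpos (by simp [hD.le]) (by linarith)

lemma edgePotential_le (hD : D < 0) (ha : 0 < a) : edgePotential D a ≤ 1 / (3 * a ^ 3) := by
  unfold edgePotential
  set t := √(-D)
  have ht : 0 < t := sqrt_pos.2 (neg_pos.2 hD)
  have ht2 : t ^ 2 = -D := sq_sqrt (neg_nonneg.2 hD.le)
  have h := sub_pow_three_div_three_le_arctan (x := t / a) (by positivity)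
  have h' : 1 / a - t ^ 2 / (3 * a ^ 3) ≤ arctan (t / a) / t := by
    rw [le_div_iff₀ ht]
    refine le_of_eq_of_le ?_ h
    field_simp
  calc 1 / D * (arctan (t / a) / t - 1 / a) ≤ 1 / D * (-(t ^ 2 / (3 * a ^ 3))) :=
        mul_le_mul_of_nonpos_left (by linarith) (by simp [hD.le])
    _ = 1 / (3 * a ^ 3) := by
        rw [ht2]
        field_simp
        exact div_self hD.ne

end EdgePotential

section QuadraticForm

variable (A B C : ℤ)

lemma eLab_comm (u v : ℤ × ℤ) : eLab A B C u v = eLab A B C v u := by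
  simp only [eLab, q, add_comm u v]
  ring

lemma eLab_self_add (u v : ℤ × ℤ) : eLab A B C u (u + v) = eLab A B C u v + 2 * q A B C u := by
  simp only [eLab, q, Prod.fst_add, Prod.snd_add]
  push_cast
  ring

lemma eLab_add_self (u v : ℤ × ℤ) : eLab A B C v (u + v) = eLab A B C u v + 2 * q A B C v := by
  simp only [eLab, q, Prod.fst_add, Prod.snd_add]
  push_cast
  ring

lemma eLab_sq_sub_four_mul_q (u v : ℤ × ℤ) :
    eLab A B C u v ^ 2 - 4 * q A B C u * q A B C v =
      ((B : ℝ) ^ 2 - 4 * A * C) * ((u.1 * v.2 - u.2 * v.1 : ℤ) : ℝ) ^ 2 := by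
  simp only [eLab, q, Prod.fst_add, Prod.snd_add]
  push_cast
  ring

lemma eLab_mul_eLab_of_det_eq_one {u v : ℤ × ℤ} (huv : u.1 * v.2 - u.2 * v.1 = 1) :
    eLab A B C u (u + v) * eLab A B C v (u + v) =
      eLab A B C u v * (eLab A B C u (u + v) + eLab A B C v (u + v)) -
        ((B : ℝ) ^ 2 - 4 * A * C) := by
  have h := eLab_sq_sub_four_mul_q A B C u v
  rw [huv, Int.cast_one, one_pow, mul_one] at h
  rw [eLab_self_add, eLab_add_self]
  linear_combination (-1) * h

variable {A B C}

lemma q_nonneg (hA : 0 ≤ A) (hB : 0 ≤ B) (hC : 0 ≤ C) {u : ℤ × ℤ} (hu₁ : 0 ≤ u.1)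
    (hu₂ : 0 ≤ u.2) : 0 ≤ q A B C u := by
  unfold q
  have : (0 : ℝ) ≤ u.1 := by exact_mod_cast hu₁
  have : (0 : ℝ) ≤ u.2 := by exact_mod_cast hu₂
  have : (0 : ℝ) ≤ A := by exact_mod_cast hA
  have : (0 : ℝ) ≤ B := by exact_mod_cast hB
  have : (0 : ℝ) ≤ C := by exact_mod_cast hC
  positivity

lemma mul_le_eLab (hA : 0 < A) (hB : 0 < B) (hC : 0 < C) {u v : ℤ × ℤ} (hu₁ : 0 ≤ u.1)
    (hu₂ : 0 ≤ u.2) (hv₁ : 0 ≤ v.1) (hv₂ : 0 ≤ v.2) :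
    (((u.1 + u.2) * (v.1 + v.2) : ℤ) : ℝ) ≤ eLab A B C u v := by
  have h : eLab A B C u v =
      ((2 * A * u.1 * v.1 + B * (u.1 * v.2 + u.2 * v.1) + 2 * C * u.2 * v.2 : ℤ) : ℝ) := by
    simp only [eLab, q, Prod.fst_add, Prod.snd_add]
    push_cast
    ring
  rw [h, Int.cast_le]
  nlinarith [mul_nonneg hu₁ hv₁, mul_nonneg hu₁ hv₂, mul_nonneg hu₂ hv₁, mul_nonneg hu₂ hv₂]

lemma pos_of_discr_neg (hA : 0 < A) (hD : B ^ 2 - 4 * A * C < 0) : 0 < C := by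
  nlinarith [sq_nonneg B]

end QuadraticForm

def stdBasis : (ℤ × ℤ) × (ℤ × ℤ) := ((1, 0), (0, 1))

lemma one_le_of_mem_S {p : (ℤ × ℤ) × (ℤ × ℤ)} (hp : p ∈ S) :
    1 ≤ p.1.1 + p.1.2 ∧ 1 ≤ p.2.1 + p.2.2 := by
  obtain ⟨⟨x₁, x₂⟩, ⟨y₁, y₂⟩⟩ := p
  obtain ⟨hx₁, hx₂, hy₁, hy₂, hdet⟩ := hp
  dsimp only at *
  constructor <;> by_contra! h
  · obtain ⟨rfl, rfl⟩ : x₁ = 0 ∧ x₂ = 0 := by omega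
    simp at hdet
  · obtain ⟨rfl, rfl⟩ : y₁ = 0 ∧ y₂ = 0 := by omega
    simp at hdet

lemma child_mem_S {p : (ℤ × ℤ) × (ℤ × ℤ)} (b : Bool) (hp : p ∈ S) : child b p ∈ S := by
  obtain ⟨hx₁, hx₂, hy₁, hy₂, hdet⟩ := hp
  cases b <;> refine ⟨?_, ?_, ?_, ?_, ?_⟩ <;> simp only [child, Prod.fst_add, Prod.snd_add] <;>
    first | omega | linear_combination hdet

lemma node_mem_S (l : List Bool) : node stdBasis l ∈ S := by
  induction l with
  | nil => simp [node, stdBasis, S]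
  | cons b l ih => exact child_mem_S b ih

lemma exists_child_eq {p : (ℤ × ℤ) × (ℤ × ℤ)} (hp : p ∈ S) (hne : p ≠ stdBasis) :
    ∃ b, ∃ p' ∈ S, child b p' = p ∧
      p'.1.1 + p'.1.2 + p'.2.1 + p'.2.2 < p.1.1 + p.1.2 + p.2.1 + p.2.2 := by
  have hpos := one_le_of_mem_S hp
  obtain ⟨⟨x₁, x₂⟩, ⟨y₁, y₂⟩⟩ := p
  obtain ⟨hx₁, hx₂, hy₁, hy₂, hdet⟩ := hp
  dsimp only at *
  by_cases hxy : x₁ ≤ y₁ ∧ x₂ ≤ y₂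
  · refine ⟨false, ((x₁, x₂), (y₁ - x₁, y₂ - x₂)),
      ⟨hx₁, hx₂, by dsimp; omega, by dsimp; omega, by dsimp; linear_combination hdet⟩, ?_, ?_⟩
    · simp [child]
    · dsimp; omega
  by_cases hyx : y₁ ≤ x₁ ∧ y₂ ≤ x₂
  · refine ⟨true, ((x₁ - y₁, x₂ - y₂), (y₁, y₂)),
      ⟨by dsimp; omega, by dsimp; omega, hy₁, hy₂, by dsimp; linear_combination hdet⟩, ?_, ?_⟩
    · simp [child]
    · dsimp; omega
  -- the only pair of `S` whose vectors are incomparable is the standard basis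
  refine absurd ?_ hne
  rw [not_and_or, not_le, not_le] at hxy hyx
  obtain ⟨rfl, rfl, rfl, rfl⟩ : x₁ = 1 ∧ x₂ = 0 ∧ y₁ = 0 ∧ y₂ = 1 := by
    rcases hxy with hyx₁ | hyx₂ <;> rcases hyx with hxy₁ | hxy₂
    · omega
    · have : (y₁ + 1) * (x₂ + 1) ≤ x₁ * y₂ := mul_le_mul hyx₁ hxy₂ (by omega) hx₁
      obtain ⟨rfl, rfl⟩ : y₁ = 0 ∧ x₂ = 0 := by constructor <;> nlinarith
      have : x₁ * y₂ = 1 := by linarith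
      exact ⟨Int.eq_one_of_mul_eq_one_right hx₁ this, rfl, rfl,
        Int.eq_one_of_mul_eq_one_left hy₂ this⟩
    · nlinarith [mul_le_mul hxy₁.le hyx₂.le hy₂ hy₁]
    · omega
  rfl

lemma exists_node_eq {p : (ℤ × ℤ) × (ℤ × ℤ)} (hp : p ∈ S) : ∃ l, node stdBasis l = p := by
  induction h : (p.1.1 + p.1.2 + p.2.1 + p.2.2).toNat using Nat.strong_induction_on
    generalizing p with
  | _ n ih =>
    by_cases hroot : p = stdBasis
    · exact ⟨[], hroot.symm⟩
    obtain ⟨b, p', hp', rfl, hlt⟩ := exists_child_eq hp hroot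
    have := hp'.1; have := hp'.2.1; have := hp'.2.2.1; have := hp'.2.2.2.1
    obtain ⟨l, rfl⟩ := ih _ (by omega) hp' rfl
    exact ⟨b :: l, rfl⟩

def coordSum : ℤ × ℤ →+ ℤ := (AddMonoidHom.id ℤ).coprod (AddMonoidHom.id ℤ)

lemma map_coordSum_node (l : List Bool) :
    Prod.map coordSum coordSum (node stdBasis l) = node (1, 1) l :=
  map_node coordSum stdBasis l

lemma node_stdBasis_injective : Function.Injective (node stdBasis) := by
  refine Function.Injective.of_comp (f := Prod.map coordSum coordSum) ?_
  simpa only [Function.comp_def, map_coordSum_node] using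
    node_injective (r := (1, 1)) (by norm_num)

noncomputable def nodeEquiv : List Bool ≃ S :=
  Equiv.ofBijective (fun l => ⟨node stdBasis l, node_mem_S l⟩)
    ⟨fun _ _ h => node_stdBasis_injective (congrArg Subtype.val h),
      fun p => (exists_node_eq p.2).imp fun _ hl => Subtype.ext hl⟩

section Series

variable {A B C : ℤ}

variable (A B C) in
noncomputable def vertexTerm (p : (ℤ × ℤ) × (ℤ × ℤ)) : ℝ :=
  1 / (eLab A B C p.1 p.2 * eLab A B C p.1 (p.1 + p.2) * eLab A B C p.2 (p.1 + p.2))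

variable (A B C) in
noncomputable def potential (p : (ℤ × ℤ) × (ℤ × ℤ)) : ℝ :=
  edgePotential ((B : ℝ) ^ 2 - 4 * A * C) (eLab A B C p.1 p.2)

lemma mul_le_eLab_of_mem_S (hA : 0 < A) (hB : 0 < B) (hD : B ^ 2 - 4 * A * C < 0)
    {p : (ℤ × ℤ) × (ℤ × ℤ)} (hp : p ∈ S) :
    (((p.1.1 + p.1.2) * (p.2.1 + p.2.2) : ℤ) : ℝ) ≤ eLab A B C p.1 p.2 :=
  mul_le_eLab hA hB (pos_of_discr_neg hA hD) hp.1 hp.2.1 hp.2.2.1 hp.2.2.2.1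

lemma eLab_pos_of_mem_S (hA : 0 < A) (hB : 0 < B) (hD : B ^ 2 - 4 * A * C < 0)
    {p : (ℤ × ℤ) × (ℤ × ℤ)} (hp : p ∈ S) : 0 < eLab A B C p.1 p.2 := by
  obtain ⟨hx, hy⟩ := one_le_of_mem_S hp
  refine lt_of_lt_of_le ?_ (mul_le_eLab_of_mem_S hA hB hD hp)
  exact_mod_cast mul_pos (by omega) (by omega)

lemma vertexTerm_eq_sub_sub (hA : 0 < A) (hB : 0 < B) (hD : B ^ 2 - 4 * A * C < 0)
    {p : (ℤ × ℤ) × (ℤ × ℤ)} (hp : p ∈ S) :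
    vertexTerm A B C p =
      potential A B C p - potential A B C (child false p) - potential A B C (child true p) := by
  have hC := pos_of_discr_neg hA hD
  have ha := eLab_pos_of_mem_S hA hB hD hp
  have hb : 0 < eLab A B C p.1 (p.1 + p.2) := by
    rw [eLab_self_add]
    linarith [q_nonneg hA.le hB.le hC.le hp.1 hp.2.1]
  have hc : 0 < eLab A B C p.2 (p.1 + p.2) := by
    rw [eLab_add_self]
    linarith [q_nonneg hA.le hB.le hC.le hp.2.2.1 hp.2.2.2.1]
  simp only [potential, child, eLab_comm A B C (p.1 + p.2) p.2]
  exact (edgePotential_sub_sub (by exact_mod_cast hD) ha hb hc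
    (eLab_mul_eLab_of_det_eq_one A B C hp.2.2.2.2)).symm

lemma potential_nonneg (hA : 0 < A) (hB : 0 < B) (hD : B ^ 2 - 4 * A * C < 0)
    {p : (ℤ × ℤ) × (ℤ × ℤ)} (hp : p ∈ S) : 0 ≤ potential A B C p :=
  edgePotential_nonneg (by exact_mod_cast hD) (eLab_pos_of_mem_S hA hB hD hp)

lemma potential_le (hA : 0 < A) (hB : 0 < B) (hD : B ^ 2 - 4 * A * C < 0)
    {p : (ℤ × ℤ) × (ℤ × ℤ)} (hp : p ∈ S) :
    potential A B C p ≤ 1 / (coordSum p.1 : ℝ) ^ 3 * (1 / (coordSum p.2 : ℝ) ^ 3) := by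
  obtain ⟨hx, hy⟩ := one_le_of_mem_S hp
  have hpos : (0 : ℝ) < ((p.1.1 + p.1.2) * (p.2.1 + p.2.2) : ℤ) := by
    exact_mod_cast mul_pos (by omega) (by omega)
  have hle := mul_le_eLab_of_mem_S hA hB hD hp
  have he := hpos.trans_le hle
  calc potential A B C p ≤ 1 / (3 * eLab A B C p.1 p.2 ^ 3) :=
        edgePotential_le (by exact_mod_cast hD) he
    _ ≤ 1 / (eLab A B C p.1 p.2 ^ 3) :=
        one_div_le_one_div_of_le (pow_pos he 3) (by linarith [pow_pos he 3])
    _ ≤ 1 / (((p.1.1 + p.1.2) * (p.2.1 + p.2.2) : ℤ) : ℝ) ^ 3 := by gcongr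
    _ = _ := by simp [coordSum, mul_pow, mul_comm]

lemma summable_potential_node (hA : 0 < A) (hB : 0 < B) (hD : B ^ 2 - 4 * A * C < 0) :
    Summable fun l => potential A B C (node stdBasis l) := by
  have hcube : Summable fun n : ℤ => ‖1 / (n : ℝ) ^ 3‖ := by
    simpa only [Real.norm_eq_abs, summable_abs_iff] using
      Real.summable_one_div_int_pow.mpr (by norm_num : 1 < 3)
  refine .of_nonneg_of_le (fun l => potential_nonneg hA hB hD (node_mem_S l))
    (fun l => ?_) ((summable_mul_of_summable_norm hcube hcube).comp_injective
      (node_injective (r := (1, 1)) (by norm_num)))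
  simpa only [Function.comp_apply, ← map_coordSum_node, Prod.map_fst, Prod.map_snd] using
    potential_le hA hB hD (node_mem_S l)

end Series

end Topograph

open Topograph

theorem stmt_1 (A B C : ℤ) (hA : 0 < A) (hB : 0 < B) (hD : B ^ 2 - 4 * A * C < 0) :
    HasSum
      (fun p : S =>
        1 / (eLab A B C p.val.1 p.val.2 * eLab A B C p.val.1 (p.val.1 + p.val.2) *
          eLab A B C p.val.2 (p.val.1 + p.val.2)))
      ((1 / ((B : ℝ) ^ 2 - 4 * A * C)) *
        (Real.arctan (Real.sqrt (-((B : ℝ) ^ 2 - 4 * A * C)) / (B : ℝ)) /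
            Real.sqrt (-((B : ℝ) ^ 2 - 4 * A * C)) -
          1 / (B : ℝ))) := by
  have hroot : eLab A B C stdBasis.1 stdBasis.2 = B := by
    simp only [eLab, q, stdBasis, Prod.mk_add_mk]
    push_cast
    ring
  rw [← nodeEquiv.hasSum_iff]
  have := hasSum_of_eq_sub_sub (fun l => potential_nonneg hA hB hD (node_mem_S l))
    (summable_potential_node hA hB hD) fun l => vertexTerm_eq_sub_sub hA hB hD (node_mem_S l)
  rwa [node, potential, hroot] at this
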